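/- arXiv:1203.4221 — 4 statements merged into one kernel-verified Lean document; each statement's English description precedes it below -/
import Mathlib

section
/- Let (Ω,F,ℙ) be a probability space and A_n ∈ F, n ∈ ℕ, with Σ_{n=1}^∞ ℙ(A_n) = ∞. Then ℙ(limsup_{n→∞} A_n) ≥ limsup_{N→∞} (Σ_{n=1}^N ℙ(A_n))² / (Σ_{n=1}^N Σ_{l=1}^N ℙ(A_n ∩ A_l)). -/
/-!
For `X = ∑_{M ≤ n < N} 1_{A n}`, Cauchy–Schwarz applied to `X = X · 1_{X > 0}` gives
`(E X)² ≤ E[X²] · ℙ(X > 0)`, i.e.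
`(∑_{M ≤ n < N} ℙ(A n))² ≤ (∑∑ ℙ(A n ∩ A l)) · ℙ(⋃_{n ≥ M} A n)`.
Since the partial sums diverge, discarding the first `M` terms does not change the ratio
asymptotically, so the limsup is at most `ℙ(⋃_{n ≥ M} A n)` for every `M`; these measures
decrease to `ℙ(limsup A n)`.
-/

open MeasureTheory Filter Topology Set
open scoped ENNReal

theorem ENNReal.sq_lintegral_mul_le {α : Type*} [MeasurableSpace α] (μ : Measure α)
    {f g : α → ℝ≥0∞} (hf : AEMeasurable f μ) (hg : AEMeasurable g μ) :
    (∫⁻ a, (f * g) a ∂μ) ^ 2 ≤ (∫⁻ a, f a ^ 2 ∂μ) * ∫⁻ a, g a ^ 2 ∂μ := by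
  have h := ENNReal.lintegral_mul_le_Lp_mul_Lq μ .two_two hf hg
  simp only [ENNReal.rpow_two] at h
  calc (∫⁻ a, (f * g) a ∂μ) ^ 2
      ≤ ((∫⁻ a, f a ^ 2 ∂μ) ^ (1 / 2 : ℝ) * (∫⁻ a, g a ^ 2 ∂μ) ^ (1 / 2 : ℝ)) ^ 2 := by
        gcongr
    _ = (∫⁻ a, f a ^ 2 ∂μ) * ∫⁻ a, g a ^ 2 ∂μ := by
        rw [mul_pow, ← ENNReal.rpow_natCast, ← ENNReal.rpow_natCast, ← ENNReal.rpow_mul,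
          ← ENNReal.rpow_mul]
        norm_num

theorem lintegral_finsetSum_indicator_one {Ω ι : Type*} [MeasurableSpace Ω] (μ : Measure Ω)
    {A : ι → Set Ω} (hA : ∀ i, MeasurableSet (A i)) (s : Finset ι) :
    ∫⁻ ω, ∑ i ∈ s, (A i).indicator 1 ω ∂μ = ∑ i ∈ s, μ (A i) := by
  rw [lintegral_finsetSum (f := fun i ω => (A i).indicator 1 ω) _
    fun i _ => measurable_const.indicator (hA i)]
  simp only [lintegral_indicator_one (hA _)]

theorem sq_sum_measure_le_sum_measure_inter_mul_measure_biUnion {Ω ι : Type*}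
    [MeasurableSpace Ω] (μ : Measure Ω) {A : ι → Set Ω} (hA : ∀ i, MeasurableSet (A i))
    (s : Finset ι) :
    (∑ i ∈ s, μ (A i)) ^ 2 ≤ (∑ i ∈ s, ∑ j ∈ s, μ (A i ∩ A j)) * μ (⋃ i ∈ s, A i) := by
  set U := ⋃ i ∈ s, A i
  have hU : MeasurableSet U := s.measurableSet_biUnion fun i _ => hA i
  set f : Ω → ℝ≥0∞ := fun ω => ∑ i ∈ s, (A i).indicator 1 ω
  have hf : Measurable f := Finset.measurable_sum _ fun i _ => measurable_const.indicator (hA i)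
  have hfU : f * U.indicator 1 = f := by
    ext ω
    by_cases hω : ω ∈ U
    · simp [hω]
    · have : ∀ i ∈ s, ω ∉ A i := fun i hi hωi => hω (mem_biUnion hi hωi)
      simp [f, hω, Finset.sum_eq_zero fun i hi => indicator_of_notMem (this i hi) _]
  have hf_sq : ∀ ω, f ω ^ 2 = ∑ i ∈ s, ∑ j ∈ s, (A i ∩ A j).indicator 1 ω := fun ω => by
    simp only [f, sq, Finset.sum_mul_sum, inter_indicator_one, Pi.mul_apply]
  have hU_sq : ∀ ω, U.indicator (1 : Ω → ℝ≥0∞) ω ^ 2 = U.indicator 1 ω := fun ω => by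
    by_cases hω : ω ∈ U <;> simp [hω]
  have h := ENNReal.sq_lintegral_mul_le μ hf.aemeasurable
    ((measurable_one (α := ℝ≥0∞)).indicator hU).aemeasurable
  simp only [hfU, hf_sq, hU_sq, lintegral_indicator_one hU, f] at h
  rwa [lintegral_finsetSum_indicator_one μ hA,
    lintegral_finsetSum (f := fun i ω => ∑ j ∈ s, (A i ∩ A j).indicator 1 ω) _
      fun i _ => Finset.measurable_sum _ fun j _ =>
        measurable_const.indicator ((hA i).inter (hA j)),
    Finset.sum_congr rfl fun i _ =>
      lintegral_finsetSum_indicator_one μ (fun j => (hA i).inter (hA j)) s] at h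

theorem sq_sum_measure_toReal_le {Ω ι : Type*} [MeasurableSpace Ω] (μ : Measure Ω)
    [IsFiniteMeasure μ] {A : ι → Set Ω} (hA : ∀ i, MeasurableSet (A i)) (s : Finset ι) :
    (∑ i ∈ s, (μ (A i)).toReal) ^ 2 ≤
      (∑ i ∈ s, ∑ j ∈ s, (μ (A i ∩ A j)).toReal) * (μ (⋃ i ∈ s, A i)).toReal := by
  have h := ENNReal.toReal_mono (ENNReal.mul_ne_top
    (ENNReal.sum_ne_top.2 fun _ _ => ENNReal.sum_ne_top.2 fun _ _ => measure_ne_top μ _)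
    (measure_ne_top μ _))
    (sq_sum_measure_le_sum_measure_inter_mul_measure_biUnion μ hA s)
  simpa [ENNReal.toReal_sum, measure_ne_top] using h

theorem sq_sum_range_sub_le {Ω : Type*} [MeasurableSpace Ω] (μ : Measure Ω)
    [IsFiniteMeasure μ] {A : ℕ → Set Ω} (hA : ∀ n, MeasurableSet (A n)) {M N : ℕ}
    (hMN : M ≤ N) :
    (∑ n ∈ Finset.range N, (μ (A n)).toReal - ∑ n ∈ Finset.range M, (μ (A n)).toReal) ^ 2 ≤
      (∑ n ∈ Finset.range N, ∑ l ∈ Finset.range N, (μ (A n ∩ A l)).toReal) *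
        (μ (⋃ n ≥ M, A n)).toReal := by
  have hsub : Finset.Ico M N ⊆ Finset.range N :=
    fun n hn => Finset.mem_range.2 (Finset.mem_Ico.1 hn).2
  rw [← Finset.sum_Ico_eq_sub _ hMN]
  refine (sq_sum_measure_toReal_le μ hA _).trans (mul_le_mul ?_ ?_ ENNReal.toReal_nonneg
    (by positivity))
  · exact (Finset.sum_le_sum fun n _ => Finset.sum_le_sum_of_subset_of_nonneg hsub
      fun _ _ _ => ENNReal.toReal_nonneg).trans
      (Finset.sum_le_sum_of_subset_of_nonneg hsub fun _ _ _ => by positivity)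
  · exact measureReal_mono (biUnion_subset_biUnion_left fun n hn => (Finset.mem_Ico.1 hn).1)
      (measure_ne_top μ _)

theorem ENNReal.tendsto_sum_range_toReal_atTop {f : ℕ → ℝ≥0∞} (hf : ∀ n, f n ≠ ∞)
    (h : ∑' n, f n = ∞) :
    Tendsto (fun N => ∑ n ∈ Finset.range N, (f n).toReal) atTop atTop := by
  refine (not_summable_iff_tendsto_nat_atTop_of_nonneg fun n => ENNReal.toReal_nonneg).1
    fun hsum => ?_
  have := ENNReal.ofReal_tsum_of_nonneg (fun n => ENNReal.toReal_nonneg) hsum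
  simp only [ENNReal.ofReal_toReal (hf _), h] at this
  exact ENNReal.ofReal_ne_top this

theorem tendsto_measure_biUnion_ge_limsup {α : Type*} [MeasurableSpace α] (μ : Measure α)
    [IsFiniteMeasure μ] {A : ℕ → Set α} (hA : ∀ n, MeasurableSet (A n)) :
    Tendsto (fun M => μ (⋃ n ≥ M, A n)) atTop (𝓝 (μ (limsup A atTop))) := by
  rw [limsup_eq_iInf_iSup_of_nat]
  exact tendsto_measure_iInter_atTop
    (fun M => (MeasurableSet.biUnion (to_countable _) fun n _ => hA n).nullMeasurableSet)
    (fun M M' h => biUnion_subset_biUnion_left fun n hn => le_trans h hn)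
    ⟨0, measure_ne_top μ _⟩

theorem limsup_sq_div_le {ι : Type*} {l : Filter ι} [l.NeBot] {S T : ι → ℝ} {a C : ℝ}
    (hC : 0 ≤ C) (hT : ∀ N, 0 ≤ T N) (hS : Tendsto S l atTop)
    (h : ∀ᶠ N in l, (S N - a) ^ 2 ≤ T N * C) :
    limsup (fun N => S N ^ 2 / T N) l ≤ C := by
  have hlim : Tendsto (fun N => C * (1 + a / (S N - a)) ^ 2) l (𝓝 C) := by
    have hSa : Tendsto (fun N => S N - a) l atTop := by
      simpa only [sub_eq_add_neg] using tendsto_atTop_add_const_right l (-a) hS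
    simpa using ((tendsto_const_nhds (x := (1 : ℝ)).add
      (tendsto_const_nhds.div_atTop hSa)).pow 2).const_mul C
  have hle : ∀ᶠ N in l, S N ^ 2 / T N ≤ C * (1 + a / (S N - a)) ^ 2 := by
    filter_upwards [h, hS.eventually_gt_atTop a] with N hN haN
    have hd : S N = (S N - a) * (1 + a / (S N - a)) := by
      field_simp [sub_ne_zero.2 haN.ne']; ring
    refine div_le_of_le_mul₀ (hT N) (by positivity) ?_
    calc S N ^ 2 = (S N - a) ^ 2 * (1 + a / (S N - a)) ^ 2 := by rw [← mul_pow, ← hd]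
      _ ≤ T N * C * (1 + a / (S N - a)) ^ 2 := by gcongr
      _ = _ := by ring
  calc limsup (fun N => S N ^ 2 / T N) l
      ≤ limsup (fun N => C * (1 + a / (S N - a)) ^ 2) l :=
        limsup_le_limsup hle
          (isCoboundedUnder_le_of_le l fun N => div_nonneg (sq_nonneg _) (hT N))
          hlim.isBoundedUnder_le
    _ = C := hlim.limsup_eq

/-- a generalized Borel–Cantelli lemma. If `(Ω,F,ℙ)` is a probability
space and `A_n` are events with `Σ ℙ(A_n) = ∞`, then
`ℙ(limsup A_n) ≥ limsup_N (Σ_{n<N} ℙ(A_n))² / (Σ_{n<N} Σ_{l<N} ℙ(A_n ∩ A_l))`. -/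
theorem stmt_1 {Ω : Type*} [MeasurableSpace Ω] (P : Measure Ω) [IsProbabilityMeasure P]
    (A : ℕ → Set Ω) (hA : ∀ n, MeasurableSet (A n))
    (hdiv : ∑' n, P (A n) = ⊤) :
    limsup (fun N : ℕ =>
        (∑ n ∈ Finset.range N, (P (A n)).toReal) ^ 2 /
          ∑ n ∈ Finset.range N, ∑ l ∈ Finset.range N, (P (A n ∩ A l)).toReal) atTop
      ≤ (P (limsup A atTop)).toReal := by
  have hS : Tendsto (fun N => ∑ n ∈ Finset.range N, (P (A n)).toReal) atTop atTop :=
    ENNReal.tendsto_sum_range_toReal_atTop (fun n => measure_ne_top P _) hdiv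
  refine ge_of_tendsto ((ENNReal.tendsto_toReal (measure_ne_top P _)).comp
    (tendsto_measure_biUnion_ge_limsup P hA)) (Eventually.of_forall fun M => ?_)
  exact limsup_sq_div_le ENNReal.toReal_nonneg (fun N => by positivity) hS
    ((eventually_ge_atTop M).mono fun N hMN => sq_sum_range_sub_le P hA hMN)
end

section
/- Every non-doubling Radon measure on ℝ^d is singular with respect to the Lebesgue measure L^d. -/
/-! At Lebesgue-almost every point `x` the ratio `μ (B(x, r)) / λ (B(x, r))` tends to the density
`f x = dμ/dλ (x)` (Besicovitch). Where `0 < f x < ∞`, the ratio for radius `2r` has the same limit,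
so `μ (B(x, 2r)) / μ (B(x, r))` behaves like `λ (B(x, 2r)) / λ (B(x, r)) = 2 ^ d`: `μ` is doubling
at `x`. Hence the absolutely continuous part `f λ` of `μ` is carried by points where `μ` is
doubling, while it is dominated by `μ`, which is non-doubling almost everywhere; so `f λ = 0`. -/

open MeasureTheory Filter Topology Metric Set

noncomputable section

abbrev Ed (d : ℕ) := EuclideanSpace ℝ (Fin d)

namespace MeasureTheory.Measure

lemma mutuallySingular_of_ae_not_of_ae_rnDeriv_ne_zero_imp {α : Type*} [MeasurableSpace α]
    {μ ν : Measure α} [μ.HaveLebesgueDecomposition ν] {p : α → Prop}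
    (hμ : ∀ᵐ x ∂μ, ¬ p x) (hν : ∀ᵐ x ∂ν, μ.rnDeriv ν x ≠ 0 → p x) : μ ⟂ₘ ν := by
  rw [← withDensity_rnDeriv_eq_zero, ← ae_eq_bot, ← empty_mem_iff_bot]
  have hp : ∀ᵐ x ∂ν.withDensity (μ.rnDeriv ν), p x :=
    (ae_withDensity_iff (μ.measurable_rnDeriv ν)).2 hν
  have hnp : ∀ᵐ x ∂ν.withDensity (μ.rnDeriv ν), ¬ p x := ae_mono (μ.withDensity_rnDeriv_le ν) hμ
  filter_upwards [hp, hnp] with x hpx hnpx using hnpx hpx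

end MeasureTheory.Measure

lemma ENNReal.div_mul_div_div_mul_cancel {m₁ m₂ a c : ENNReal} (ha₀ : a ≠ 0) (ha : a ≠ ⊤)
    (hc₀ : c ≠ 0) (hc : c ≠ ⊤) : m₂ / (c * a) / (m₁ / a) * c = m₂ / m₁ := by
  simp only [div_eq_mul_inv, ENNReal.mul_inv (Or.inl hc₀) (Or.inl hc),
    ENNReal.mul_inv (Or.inr (ENNReal.inv_ne_top.2 ha₀)) (Or.inr (ENNReal.inv_ne_zero.2 ha)),
    inv_inv]
  calc m₂ * (c⁻¹ * a⁻¹) * (m₁⁻¹ * a) * c = m₂ * m₁⁻¹ * (c⁻¹ * c) * (a⁻¹ * a) := by ring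
    _ = m₂ * m₁⁻¹ := by
      rw [ENNReal.inv_mul_cancel hc₀ hc, ENNReal.inv_mul_cancel ha₀ ha, mul_one, mul_one]

lemma tendsto_const_mul_nhdsGT_zero {t : ℝ} (ht : 0 < t) :
    Tendsto (t * ·) (𝓝[>] (0 : ℝ)) (𝓝[>] 0) :=
  tendsto_comap.mono_left (comap_mulLeft_nhdsGT_zero ht).ge

section ScaledBalls

variable {E : Type*} [NormedAddCommGroup E] [NormedSpace ℝ E] [FiniteDimensional ℝ E]
  [MeasurableSpace E] [BorelSpace E] (μ ν : Measure E) [ν.IsAddHaarMeasure]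

lemma tendsto_measure_closedBall_const_mul_div_of_tendsto_div_addHaar {x : E} {L : ENNReal}
    (hL₀ : L ≠ 0) (hL : L ≠ ⊤)
    (hx : Tendsto (fun r => μ (closedBall x r) / ν (closedBall x r)) (𝓝[>] 0) (𝓝 L))
    {t : ℝ} (ht : 0 < t) :
    Tendsto (fun r => μ (closedBall x (t * r)) / μ (closedBall x r)) (𝓝[>] 0)
      (𝓝 (ENNReal.ofReal (t ^ Module.finrank ℝ E))) := by
  set c := ENNReal.ofReal (t ^ Module.finrank ℝ E)
  have hc₀ : c ≠ 0 := by positivity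
  have hscaled := hx.comp (tendsto_const_mul_nhdsGT_zero ht)
  have hquot := ENNReal.Tendsto.mul_const (b := c)
    (ENNReal.Tendsto.div hscaled (Or.inl hL₀) hx (Or.inl hL)) (Or.inr ENNReal.ofReal_ne_top)
  rw [ENNReal.div_self hL₀ hL, one_mul] at hquot
  refine hquot.congr' ?_
  filter_upwards [self_mem_nhdsWithin] with r (hr : 0 < r)
  simp only [Function.comp_apply, ν.addHaar_closedBall_mul_of_pos x ht,
    ← ν.addHaar_closedBall_center x r]
  exact ENNReal.div_mul_div_div_mul_cancel (measure_closedBall_pos ν x hr).ne'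
    measure_closedBall_lt_top.ne hc₀ ENNReal.ofReal_ne_top

lemma ae_tendsto_measure_closedBall_const_mul_div [IsLocallyFiniteMeasure μ] {t : ℝ}
    (ht : 0 < t) :
    ∀ᵐ x ∂ν, μ.rnDeriv ν x ≠ 0 →
      Tendsto (fun r => μ (closedBall x (t * r)) / μ (closedBall x r)) (𝓝[>] 0)
        (𝓝 (ENNReal.ofReal (t ^ Module.finrank ℝ E))) := by
  filter_upwards [Besicovitch.ae_tendsto_rnDeriv μ ν, μ.rnDeriv_lt_top ν] with x hx hfin hpos
  exact tendsto_measure_closedBall_const_mul_div_of_tendsto_div_addHaar μ ν hpos hfin.ne hx ht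

end ScaledBalls

theorem stmt_5_general (d : ℕ) (μ : Measure (Ed d)) (hRadon : IsLocallyFiniteMeasure μ)
    (hnd : ∀ᵐ x ∂μ,
      ¬ limsup (fun r : ℝ => μ (closedBall x (2 * r)) / μ (closedBall x r))
          (𝓝[>] (0:ℝ)) < ⊤) :
    Measure.MutuallySingular μ (volume : Measure (Ed d)) := by
  refine Measure.mutuallySingular_of_ae_not_of_ae_rnDeriv_ne_zero_imp hnd ?_
  filter_upwards [ae_tendsto_measure_closedBall_const_mul_div μ volume two_pos] with x hx hpos
  rw [(hx hpos).limsup_eq]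
  exact ENNReal.ofReal_lt_top

/-- every non-doubling Radon measure on ℝ^d (one for which the doubling
condition `limsup_{r→0} μ(B(x,2r))/μ(B(x,r)) < ∞` fails at `μ`-a.e. `x`) is singular
with respect to Lebesgue measure. -/
theorem stmt_5 (d : ℕ) (hd : 0 < d) (μ : Measure (Ed d)) (hRadon : IsLocallyFiniteMeasure μ)
    (hnd : ∀ᵐ x ∂μ,
      ¬ limsup (fun r : ℝ => μ (closedBall x (2 * r)) / μ (closedBall x r))
          (𝓝[>] (0:ℝ)) < ⊤) :
    Measure.MutuallySingular μ (volume : Measure (Ed d)) :=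
  stmt_5_general d μ hRadon hnd

end
end

section
/- If μ is a Radon measure on ℝ with non-empty support, then there exists a point x ∈ spt μ such that L ∉ Tan(μ,x) or L⁺ ∉ Tan(μ,x), where L is Lebesgue measure on ℝ and L⁺ = L⌞[0,∞) is the Heaviside measure. -/
open MeasureTheory Filter Topology Metric Set

noncomputable section

/-- Weak convergence of a sequence of Radon measures on ℝ, tested against
continuous compactly supported functions. -/
def WeakTendstoR (μs : ℕ → Measure ℝ) (ν : Measure ℝ) : Prop :=
  ∀ φ : ℝ → ℝ, Continuous φ → HasCompactSupport φ →
    Tendsto (fun i => ∫ x, φ x ∂(μs i)) atTop (𝓝 (∫ x, φ x ∂ν))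

/-- The measure `c • T_{x,r♯} μ`, where `T_{x,r♯}μ(A) = μ(rA + x)`. -/
def blowupR (μ : Measure ℝ) (x r c : ℝ) : Measure ℝ :=
  ENNReal.ofReal c • Measure.map (fun y => (y - x) / r) μ

/-- `ν` is a tangent measure of `μ` at `x`: `ν` is a non-zero Radon measure and
`c_i T_{x,r_i♯}μ → ν` weakly for some `r_i ↘ 0`, `c_i > 0`. -/
def IsTangentMeasureR (μ : Measure ℝ) (x : ℝ) (ν : Measure ℝ) : Prop :=
  IsLocallyFiniteMeasure ν ∧ ν ≠ 0 ∧
    ∃ r c : ℕ → ℝ, (∀ i, 0 < r i) ∧ StrictAnti r ∧ Tendsto r atTop (𝓝 0) ∧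
      (∀ i, 0 < c i) ∧ WeakTendstoR (fun i => blowupR μ x (r i) (c i)) ν

/-- The support of a measure on ℝ. -/
def sptR (μ : Measure ℝ) : Set ℝ := {x | ∀ r > 0, 0 < μ (closedBall x r)}

/-- The Heaviside measure `L⁺ = L ⌞ [0,∞)`. -/
def heaviside : Measure ℝ := volume.restrict (Ici 0)

/-!
Take `x₀ ∈ spt μ`. If `μ` vanishes on `(x₀ - 1, x₀)`, every blow-up at `x₀` gives no mass to
`(-1, 0)`, so `L` is not tangent at `x₀`. Otherwise `a = μ (x₀ - 1, x₀] > 0`. The function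
`F t = μ (x₀ - 1, t]` is monotone and right-continuous, hence upper semicontinuous, so `F - φ`
attains its maximum on `[x₀ - 1, x₀ + 1]`; for a suitable piecewise linear increasing `φ` the
maximum point `z` is interior. There `μ (z - r, z] ≥ c₁ r` and `μ (z, z + r] ≤ c₂ r` for small
`r`, so `z ∈ spt μ` and the blow-ups at `z` put at most `c₂ / c₁` times as much mass on `(0, 1]`
as on `(-1, 0]`. This is incompatible with convergence to `L⁺`, which gives `(0, 1)` mass `1`
but small neighbourhoods of `[-1, 0]` arbitrarily small mass.
-/

open scoped ENNReal

lemma exists_continuous_eqOn_one_Icc_eqOn_zero {a b c d : ℝ} (hab : a < b) (hcd : c < d) :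
    ∃ f : C(ℝ, ℝ), EqOn f 1 (Icc b c) ∧ EqOn f 0 (Ioo a d)ᶜ ∧ HasCompactSupport f ∧
      ∀ t, f t ∈ Icc (0 : ℝ) 1 :=
  exists_continuous_one_zero_of_isCompact isCompact_Icc isOpen_Ioo.isClosed_compl
    (disjoint_compl_right_iff_subset.2 (Icc_subset_Ioo hab hcd))

section IntegralBounds

variable {α : Type*} [MeasurableSpace α] {ν : Measure α} {f : α → ℝ} {s : Set α}

lemma integral_le_measureReal (hs : MeasurableSet s) (hνs : ν s ≠ ∞) (hf0 : 0 ≤ f)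
    (hf1 : f ≤ 1) (hfs : EqOn f 0 sᶜ) : ∫ x, f x ∂ν ≤ ν.real s := by
  rw [← integral_indicator_one hs]
  refine integral_mono_of_nonneg (.of_forall hf0)
    ((integrable_indicator_iff hs).2 (integrableOn_const hνs)) (.of_forall fun x => ?_)
  by_cases hx : x ∈ s
  · simpa [hx] using hf1 x
  · simp [hx, hfs hx]

lemma measureReal_le_integral (hs : MeasurableSet s) (hf : Integrable f ν) (hf0 : 0 ≤ f)
    (hfs : EqOn f 1 s) : ν.real s ≤ ∫ x, f x ∂ν := by
  rw [← integral_indicator_one hs]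
  refine integral_mono_of_nonneg (.of_forall (indicator_nonneg (fun _ _ => zero_le_one)))
    hf (.of_forall fun x => ?_)
  by_cases hx : x ∈ s
  · simp [hx, hfs hx]
  · simpa [hx] using hf0 x

end IntegralBounds

section Blowup

variable (μ : Measure ℝ) (x c : ℝ) {r : ℝ}

lemma blowupR_apply {s : Set ℝ} (hs : MeasurableSet s) :
    blowupR μ x r c s = ENNReal.ofReal c * μ ((fun y => (y - x) / r) ⁻¹' s) := by
  rw [blowupR, Measure.smul_apply, Measure.map_apply (by fun_prop) hs, smul_eq_mul]

lemma measureReal_blowupR_Ioc (hr : 0 < r) (hc : 0 ≤ c) (a b : ℝ) :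
    (blowupR μ x r c).real (Ioc a b) = c * μ.real (Ioc (x + a * r) (x + b * r)) := by
  rw [measureReal_def, blowupR_apply μ x c measurableSet_Ioc, ENNReal.toReal_mul,
    ENNReal.toReal_ofReal hc, measureReal_def]
  congr 3
  ext y
  simp only [mem_preimage, mem_Ioc, lt_div_iff₀ hr, div_le_iff₀ hr, tsub_le_iff_right]
  constructor <;> rintro ⟨h1, h2⟩ <;> constructor <;> linarith

lemma blowupR_Ioo (hr : 0 < r) (a b : ℝ) :
    blowupR μ x r c (Ioo a b) = ENNReal.ofReal c * μ (Ioo (x + a * r) (x + b * r)) := by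
  rw [blowupR_apply μ x c measurableSet_Ioo]
  congr 2
  ext y
  simp only [mem_preimage, mem_Ioo, lt_div_iff₀ hr, div_lt_iff₀ hr]
  constructor <;> rintro ⟨h1, h2⟩ <;> constructor <;> linarith

lemma isFiniteMeasureOnCompacts_blowupR [IsFiniteMeasureOnCompacts μ] (hr : r ≠ 0) :
    IsFiniteMeasureOnCompacts (blowupR μ x r c) := by
  have := Measure.IsFiniteMeasureOnCompacts.map μ
    ((Homeomorph.subRight x).trans (Homeomorph.mulRight₀ r⁻¹ (inv_ne_zero hr)))
  have hg : ⇑((Homeomorph.subRight x).trans (Homeomorph.mulRight₀ r⁻¹ (inv_ne_zero hr))) =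
      fun y => (y - x) / r := by
    ext y; simp [div_eq_mul_inv]
  rw [hg] at this
  exact IsFiniteMeasureOnCompacts.smul _ ENNReal.ofReal_ne_top

end Blowup

instance : IsLocallyFiniteMeasure heaviside := by
  unfold heaviside; infer_instance

lemma heaviside_real_Icc {a b : ℝ} (ha : 0 ≤ a) (hab : a ≤ b) :
    heaviside.real (Icc a b) = b - a := by
  rw [heaviside, measureReal_restrict_apply measurableSet_Icc,
    inter_eq_left.2 (Icc_subset_Ici_self.trans (Ici_subset_Ici.2 ha)),
    Real.volume_real_Icc_of_le hab]

lemma heaviside_real_Ioo {a b : ℝ} (ha : a < 0) (hb : 0 ≤ b) : heaviside.real (Ioo a b) = b := by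
  rw [heaviside, measureReal_restrict_apply measurableSet_Ioo]
  have : Ioo a b ∩ Ici 0 = Ico 0 b := by
    ext t
    simp only [mem_inter_iff, mem_Ioo, mem_Ici, mem_Ico]
    constructor
    · rintro ⟨⟨-, h⟩, h'⟩; exact ⟨h', h⟩
    · rintro ⟨h, h'⟩; exact ⟨⟨by linarith, h'⟩, h⟩
  rw [this, Real.volume_real_Ico_of_le hb, sub_zero]

section WeakLimits

variable {νs : ℕ → Measure ℝ}

lemma not_weakTendstoR_volume (h : ∀ᶠ i in atTop, νs i (Ioo (-1) 0) = 0) :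
    ¬ WeakTendstoR νs volume := by
  intro hw
  obtain ⟨f, hf1, hf0, hfc, hf01⟩ := exists_continuous_eqOn_one_Icc_eqOn_zero
    (a := -1) (b := -3/4) (c := -1/4) (d := 0) (by norm_num) (by norm_num)
  have hlim : ∫ t, f t ≤ 0 := by
    refine le_of_tendsto (hw f f.continuous hfc) ?_
    filter_upwards [h] with i hi
    calc ∫ t, f t ∂νs i ≤ (νs i).real (Ioo (-1) 0) :=
          integral_le_measureReal measurableSet_Ioo (by simp [hi]) (fun t => (hf01 t).1)
            (fun t => (hf01 t).2) hf0
      _ = 0 := by simp [measureReal_def, hi]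
  have := measureReal_le_integral (ν := volume) measurableSet_Icc
    (f.continuous.integrable_of_hasCompactSupport hfc) (fun t => (hf01 t).1) hf1
  rw [Real.volume_real_Icc_of_le (by norm_num)] at this
  linarith

lemma not_weakTendstoR_heaviside [∀ i, IsFiniteMeasureOnCompacts (νs i)] {K : ℝ} (hK : 0 ≤ K)
    (h : ∀ᶠ i in atTop, (νs i).real (Ioc 0 1) ≤ K * (νs i).real (Ioc (-1) 0)) :
    ¬ WeakTendstoR νs heaviside := by
  intro hw
  set δ := 1 / (4 * (K + 1))
  have hδ : 0 < δ := by positivity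
  obtain ⟨f, hf1, hf0, hfc, hf01⟩ := exists_continuous_eqOn_one_Icc_eqOn_zero
    (a := 0) (b := 1/4) (c := 3/4) (d := 1) (by norm_num) (by norm_num)
  obtain ⟨g, hg1, hg0, hgc, hg01⟩ := exists_continuous_eqOn_one_Icc_eqOn_zero
    (a := -2) (b := -1) (c := 0) (d := δ) (by norm_num) hδ
  have hlim : ∫ t, f t ∂heaviside ≤ K * ∫ t, g t ∂heaviside := by
    refine le_of_tendsto_of_tendsto (hw f f.continuous hfc) ((hw g g.continuous hgc).const_mul K)
      (h.mono fun i hi => ?_)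
    calc ∫ t, f t ∂νs i ≤ (νs i).real (Ioc 0 1) :=
          integral_le_measureReal measurableSet_Ioc measure_Ioc_lt_top.ne (fun t => (hf01 t).1)
            (fun t => (hf01 t).2) (hf0.mono (compl_subset_compl.2 Ioo_subset_Ioc_self))
      _ ≤ K * (νs i).real (Ioc (-1) 0) := hi
      _ ≤ K * ∫ t, g t ∂νs i :=
          mul_le_mul_of_nonneg_left (measureReal_le_integral measurableSet_Ioc
            (g.continuous.integrable_of_hasCompactSupport hgc) (fun t => (hg01 t).1)
            (hg1.mono Ioc_subset_Icc_self)) hK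
  have hf : 1 / 2 ≤ ∫ t, f t ∂heaviside := by
    have := measureReal_le_integral (ν := heaviside) measurableSet_Icc
      (f.continuous.integrable_of_hasCompactSupport hfc) (fun t => (hf01 t).1) hf1
    rw [heaviside_real_Icc (by norm_num) (by norm_num)] at this
    linarith
  have hg : ∫ t, g t ∂heaviside ≤ δ := by
    have := integral_le_measureReal (ν := heaviside) measurableSet_Ioo measure_Ioo_lt_top.ne
      (fun t => (hg01 t).1) (fun t => (hg01 t).2) hg0
    rwa [heaviside_real_Ioo (by norm_num) hδ.le] at this
  have hKδ : K * δ < 1 / 2 := by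
    rw [mul_one_div, div_lt_div_iff₀ (by positivity) two_pos]
    linarith
  linarith [mul_le_mul_of_nonneg_left hg hK]

end WeakLimits

lemma not_isTangentMeasureR_volume_of_measure_Ioo_eq_zero {μ : Measure ℝ} {x ρ : ℝ} (hρ : 0 < ρ)
    (h : μ (Ioo (x - ρ) x) = 0) : ¬ IsTangentMeasureR μ x volume := by
  rintro ⟨-, -, r, c, hr, -, hr0, -, hw⟩
  refine not_weakTendstoR_volume ?_ hw
  filter_upwards [hr0.eventually (ge_mem_nhds hρ)] with i hi
  rw [blowupR_Ioo μ x (c i) (hr i), measure_mono_null (fun y hy => ?_) h, mul_zero]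
  simp only [neg_mul, one_mul, zero_mul, add_zero, mem_Ioo] at hy ⊢
  constructor <;> linarith [hy.1, hy.2]

lemma not_isTangentMeasureR_heaviside_of_le_mul {μ : Measure ℝ} [IsLocallyFiniteMeasure μ]
    {x r₀ K : ℝ} (hr₀ : 0 < r₀) (hK : 0 ≤ K)
    (h : ∀ r, 0 < r → r ≤ r₀ → μ.real (Ioc x (x + r)) ≤ K * μ.real (Ioc (x - r) x)) :
    ¬ IsTangentMeasureR μ x heaviside := by
  rintro ⟨-, -, r, c, hr, -, hr0, hc, hw⟩
  have := fun i => isFiniteMeasureOnCompacts_blowupR μ x (c i) (hr i).ne'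
  refine not_weakTendstoR_heaviside hK ?_ hw
  filter_upwards [hr0.eventually (ge_mem_nhds hr₀)] with i hi
  rw [measureReal_blowupR_Ioc μ x (c i) (hr i) (hc i).le,
    measureReal_blowupR_Ioc μ x (c i) (hr i) (hc i).le]
  simp only [zero_mul, add_zero, one_mul, neg_one_mul, ← sub_eq_add_neg]
  calc c i * μ.real (Ioc x (x + r i)) ≤ c i * (K * μ.real (Ioc (x - r i) x)) :=
        mul_le_mul_of_nonneg_left (h _ (hr i) hi) (hc i).le
    _ = K * (c i * μ.real (Ioc (x - r i) x)) := by ring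

lemma exists_mem_Ioo_isMaxOn {α β : Type*} [LinearOrder α] [TopologicalSpace α]
    [CompactIccSpace α] [LinearOrder β] {G : α → β} {u v w : α}
    (hG : UpperSemicontinuousOn G (Icc u v)) (hw : w ∈ Icc u v) (hu : G u < G w)
    (hv : G v < G w) : ∃ z ∈ Ioo u v, IsMaxOn G (Icc u v) z := by
  obtain ⟨z, hz, hmax⟩ := hG.exists_isMaxOn ⟨w, hw⟩ isCompact_Icc
  have hwz : G w ≤ G z := hmax hw
  refine ⟨z, ⟨hz.1.lt_of_ne ?_, hz.2.lt_of_ne ?_⟩, hmax⟩ <;>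
    rintro rfl <;> order

section OneSidedBounds

variable (μ : Measure ℝ) [IsLocallyFiniteMeasure μ]

lemma measureReal_Ioc_add_Ioc {a b c : ℝ} (hab : a ≤ b) (hbc : b ≤ c) :
    μ.real (Ioc a b) + μ.real (Ioc b c) = μ.real (Ioc a c) := by
  rw [← Ioc_union_Ioc_eq_Ioc hab hbc,
    measureReal_union (Ioc_disjoint_Ioc_of_le le_rfl) measurableSet_Ioc
      measure_Ioc_lt_top.ne measure_Ioc_lt_top.ne]

lemma upperSemicontinuous_measureReal_Ioc (u : ℝ) :
    UpperSemicontinuous fun t => μ.real (Ioc u t) := by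
  intro t y hy
  have hInter : ⋂ s > t, Ioc u s = Ioc u t := by
    ext w
    simp only [mem_iInter, mem_Ioc]
    exact ⟨fun h => ⟨(h (t + 1) (by linarith)).1,
        le_of_forall_gt_imp_ge_of_dense fun s hs => (h s hs).2⟩,
      fun h s hs => ⟨h.1, h.2.trans hs.le⟩⟩
  have hright : Tendsto (fun s => μ.real (Ioc u s)) (𝓝[>] t) (𝓝 (μ.real (Ioc u t))) := by
    have := tendsto_measure_biInter_gt (μ := μ) (s := Ioc u) (a := t)
      (fun _ _ => nullMeasurableSet_Ioc) (fun _ _ _ hij => Ioc_subset_Ioc_right hij)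
      ⟨t + 1, by linarith, measure_Ioc_lt_top.ne⟩
    rw [hInter] at this
    exact (ENNReal.tendsto_toReal measure_Ioc_lt_top.ne).comp this
  obtain ⟨s, hs, hts⟩ := ((hright.eventually (gt_mem_nhds hy)).and self_mem_nhdsWithin).exists
  filter_upwards [Iio_mem_nhds hts] with s' hs'
  exact (measureReal_mono (Ioc_subset_Ioc_right hs'.le) measure_Ioc_lt_top.ne).trans_lt hs

lemma exists_measureReal_Ioc_linear_bounds {x₀ : ℝ} (h : 0 < μ.real (Ioc (x₀ - 1) x₀)) :
    ∃ z, ∃ r₀ > 0, ∃ c₁ > 0, ∃ c₂ ≥ 0, ∀ r, 0 < r → r ≤ r₀ →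
      c₁ * r ≤ μ.real (Ioc (z - r) z) ∧ μ.real (Ioc z (z + r)) ≤ c₂ * r := by
  set a := μ.real (Ioc (x₀ - 1) x₀)
  set b := μ.real (Ioc x₀ (x₀ + 1))
  set F := fun t => μ.real (Ioc (x₀ - 1) t)
  -- slope `a / 2` left of `x₀` and `> b` right of it, so `F - φ` is larger at `x₀` than at `x₀ ± 1`
  set φ := fun t => a / 2 * t + (b + 1) * max (t - x₀) 0
  have hb : 0 ≤ b := measureReal_nonneg
  have hG : UpperSemicontinuous fun t => F t - φ t := by
    simpa only [sub_eq_add_neg] using (upperSemicontinuous_measureReal_Ioc μ _).add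
      (by fun_prop : Continuous fun t => -φ t).upperSemicontinuous
  have hleft : F (x₀ - 1) - φ (x₀ - 1) < F x₀ - φ x₀ := by
    simp only [F, φ, Ioc_self, measureReal_empty, sub_self, max_self]
    norm_num
    linarith
  have hright : F (x₀ + 1) - φ (x₀ + 1) < F x₀ - φ x₀ := by
    have : F (x₀ + 1) = a + b := (measureReal_Ioc_add_Ioc μ (by linarith) (by linarith)).symm
    simp only [this, φ, sub_self, max_self]
    norm_num
    linarith
  obtain ⟨z, ⟨hzl, hzr⟩, hmax⟩ := exists_mem_Ioo_isMaxOn (hG.upperSemicontinuousOn _)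
    ⟨by linarith, by linarith⟩ hleft hright
  refine ⟨z, min (z - (x₀ - 1)) (x₀ + 1 - z), lt_min (by linarith) (by linarith), a / 2,
    by positivity, a / 2 + b + 1, by positivity, fun r hr hrr => ?_⟩
  have hr₁ := hrr.trans (min_le_left _ _)
  have hr₂ := hrr.trans (min_le_right _ _)
  constructor
  · have hGz : F (z - r) - φ (z - r) ≤ F z - φ z := hmax ⟨by linarith, by linarith⟩
    have hF : F (z - r) + μ.real (Ioc (z - r) z) = F z :=
      measureReal_Ioc_add_Ioc μ (by linarith) (by linarith)
    have hφ : (b + 1) * max (z - r - x₀) 0 ≤ (b + 1) * max (z - x₀) 0 :=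
      mul_le_mul_of_nonneg_left (max_le_max (by linarith) le_rfl) (by linarith)
    simp only [φ] at hGz
    linarith
  · have hGz : F (z + r) - φ (z + r) ≤ F z - φ z := hmax ⟨by linarith, by linarith⟩
    have hF : F z + μ.real (Ioc z (z + r)) = F (z + r) :=
      measureReal_Ioc_add_Ioc μ (by linarith) (by linarith)
    have hφ : (b + 1) * max (z + r - x₀) 0 ≤ (b + 1) * (max (z - x₀) 0 + r) :=
      mul_le_mul_of_nonneg_left (max_le (by linarith [le_max_left (z - x₀) 0])
        (by linarith [le_max_right (z - x₀) 0])) (by linarith)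
    simp only [φ] at hGz
    linarith

end OneSidedBounds

lemma mem_sptR_of_mul_le_measureReal_Ioc {μ : Measure ℝ} {z r₀ c : ℝ} (hr₀ : 0 < r₀)
    (hc : 0 < c) (h : ∀ r, 0 < r → r ≤ r₀ → c * r ≤ μ.real (Ioc (z - r) z)) : z ∈ sptR μ := by
  intro ρ hρ
  have hr : 0 < min ρ r₀ := lt_min hρ hr₀
  have hpos : 0 < μ.real (Ioc (z - min ρ r₀) z) :=
    (mul_pos hc hr).trans_le (h _ hr (min_le_right _ _))
  have hne : μ (Ioc (z - min ρ r₀) z) ≠ 0 := fun h0 => by simp [measureReal_def, h0] at hpos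
  refine (pos_of_ne_zero hne).trans_le (measure_mono ?_)
  rw [Real.closedBall_eq_Icc]
  exact Ioc_subset_Icc_self.trans (Icc_subset_Icc (by linarith [min_le_left ρ r₀]) (by linarith))

/-- if `μ` is a Radon measure on ℝ with non-empty support, then there is
`x ∈ spt μ` with `L ∉ Tan(μ,x)` or `L⁺ ∉ Tan(μ,x)`. -/
theorem stmt_6 (μ : Measure ℝ) (hRadon : IsLocallyFiniteMeasure μ)
    (hspt : (sptR μ).Nonempty) :
    ∃ x ∈ sptR μ,
      ¬ IsTangentMeasureR μ x volume ∨ ¬ IsTangentMeasureR μ x heaviside := by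
  obtain ⟨x₀, hx₀⟩ := hspt
  by_cases hgap : μ (Ioo (x₀ - 1) x₀) = 0
  · exact ⟨x₀, hx₀, .inl (not_isTangentMeasureR_volume_of_measure_Ioo_eq_zero one_pos hgap)⟩
  have hpos : 0 < μ.real (Ioc (x₀ - 1) x₀) :=
    ENNReal.toReal_pos (fun h => hgap (measure_mono_null Ioo_subset_Ioc_self h))
      measure_Ioc_lt_top.ne
  obtain ⟨z, r₀, hr₀, c₁, hc₁, c₂, hc₂, hbounds⟩ := exists_measureReal_Ioc_linear_bounds μ hpos
  have hK : 0 ≤ c₂ / c₁ := div_nonneg hc₂ hc₁.le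
  refine ⟨z, mem_sptR_of_mul_le_measureReal_Ioc hr₀ hc₁ fun r hr hr' => (hbounds r hr hr').1,
    .inr (not_isTangentMeasureR_heaviside_of_le_mul hr₀ hK fun r hr hr' => ?_)⟩
  obtain ⟨hleft, hright⟩ := hbounds r hr hr'
  calc μ.real (Ioc z (z + r)) ≤ c₂ * r := hright
    _ = c₂ / c₁ * (c₁ * r) := by field_simp
    _ ≤ c₂ / c₁ * μ.real (Ioc (z - r) z) := mul_le_mul_of_nonneg_left hleft hK
end
end

section
/- Let μ be a Radon measure on ℝ whose support is a non-empty proper subset of ℝ. Then there exists x ∈ spt μ such that L ∉ Tan(μ,x), where L is Lebesgue measure on ℝ. -/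
open MeasureTheory Filter Topology Metric Set

noncomputable section

lemma sptR_closed (μ : Measure ℝ) : IsClosed (sptR μ) := by
  rw [← isOpen_compl_iff, Metric.isOpen_iff]
  intro z hz
  simp only [sptR, mem_compl_iff, mem_setOf_eq, not_forall] at hz
  obtain ⟨r, hr, h0⟩ := hz
  rw [not_lt, le_zero_iff] at h0
  refine ⟨r / 2, by linarith, fun w hw => ?_⟩
  simp only [sptR, mem_compl_iff, mem_setOf_eq, not_forall]
  refine ⟨r / 2, by linarith, ?_⟩
  rw [not_lt, le_zero_iff, ← le_zero_iff, ← h0]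
  apply measure_mono
  intro u hu
  simp only [mem_closedBall] at *
  have := mem_ball.mp hw
  calc dist u z ≤ dist u w + dist w z := dist_triangle _ _ _
    _ ≤ r := by rw [dist_comm w z] at *; linarith [le_of_lt this]

lemma null_of_disjoint_sptR (μ : Measure ℝ) (s : Set ℝ) (hs : Disjoint s (sptR μ)) :
    μ s = 0 := by
  apply measure_null_of_locally_null
  intro z hz
  have hz' : z ∉ sptR μ := fun h => (disjoint_left.mp hs) hz h
  simp only [sptR, mem_setOf_eq, not_forall] at hz'
  obtain ⟨r, hr, h0⟩ := hz'
  rw [not_lt, le_zero_iff] at h0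
  exact ⟨closedBall z r, nhdsWithin_le_nhds (closedBall_mem_nhds z hr), h0⟩

/-- If `μ` vanishes on a one-sided interval at `b` (side `s = ±1`), then Lebesgue
measure is not a tangent measure of `μ` at `b`. -/
lemma key_side (μ : Measure ℝ) (b δ s : ℝ) (hδ : 0 < δ) (hs : s = 1 ∨ s = -1)
    (hnull : μ {y | s * (y - b) ∈ Ioo (-δ) 0} = 0) :
    ¬ IsTangentMeasureR μ b volume := by
  have hs2 : s * s = 1 := by rcases hs with h | h <;> rw [h] <;> ring
  have hsabs : |s| = 1 := by rcases hs with h | h <;> rw [h] <;> simp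
  rintro ⟨-, -, r, c, hr, -, hr0, hc, hweak⟩
  set φ : ℝ → ℝ := fun t => max 0 (1 - |t + 2 * s|) with hφdef
  have hφcont : Continuous φ := by fun_prop
  have hφ0 : ∀ t, |t + 2 * s| ≥ 1 → φ t = 0 := by
    intro t ht
    simp only [hφdef, max_eq_left_iff]
    linarith
  have hφcs : HasCompactSupport φ := by
    apply HasCompactSupport.intro (isCompact_closedBall (-(2*s)) 1)
    intro t ht
    apply hφ0
    simp only [mem_closedBall, Real.dist_eq, not_le] at ht
    have : t - -(2*s) = t + 2*s := by ring
    rw [this] at ht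
    linarith
  have h1 := hweak φ hφcont hφcs
  -- eventually the integrals are zero
  have hev : ∀ᶠ i in atTop, ∫ x, φ x ∂(blowupR μ b (r i) (c i)) = 0 := by
    have hrsmall : ∀ᶠ i in atTop, r i < δ / 3 := by
      have := hr0 (Iio_mem_nhds (show (0:ℝ) < δ / 3 by linarith))
      exact this
    filter_upwards [hrsmall] with i hi
    have hri := hr i
    have hmeas : Measurable (fun y : ℝ => (y - b) / r i) := by fun_prop
    rw [blowupR, integral_smul_measure,
      integral_map hmeas.aemeasurable hφcont.aestronglyMeasurable]
    have : ∫ y, φ ((y - b) / r i) ∂μ = 0 := by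
      apply integral_eq_zero_of_ae
      rw [Filter.EventuallyEq, ae_iff]
      apply measure_mono_null _ hnull
      intro y hy
      simp only [mem_setOf_eq, Pi.zero_apply] at hy ⊢
      -- φ ((y-b)/r i) ≠ 0 means |(y-b)/r i + 2 s| < 1
      have habs : |(y - b) / r i + 2 * s| < 1 := by
        by_contra hcon
        exact hy (hφ0 _ (not_lt.mp hcon))
      rw [abs_lt] at habs
      -- so s * ((y-b)/ r i) ∈ (-3, -1)
      have h3 : s * ((y - b) / r i) ∈ Ioo (-3 : ℝ) (-1) := by
        rcases hs with h | h <;> rw [h] at habs ⊢ <;> constructor <;>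
          · simp only [one_mul, neg_one_mul, neg_lt, neg_neg] at * <;> linarith
      obtain ⟨hl, hu⟩ := h3
      have e : s * ((y - b) / r i) * r i = s * (y - b) := by
        field_simp
      have hy1 : s * (y - b) < -r i := by
        have := mul_lt_mul_of_pos_right hu hri
        rw [e] at this; linarith
      have hy2 : -(3 * r i) < s * (y - b) := by
        have := mul_lt_mul_of_pos_right hl hri
        rw [e] at this; linarith
      constructor <;> [skip; linarith]
      calc -δ ≤ -(3 * r i) := by linarith
        _ < s * (y - b) := hy2
    rw [this, smul_zero]
  -- hence ∫ φ dvolume = 0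
  have hzero : ∫ x, φ x ∂(volume : Measure ℝ) = 0 := by
    have : Tendsto (fun _ : ℕ => (0:ℝ)) atTop (𝓝 (∫ x, φ x ∂(volume : Measure ℝ))) :=
      h1.congr' (hev.mono fun i h => h)
    exact tendsto_nhds_unique this tendsto_const_nhds
  -- but ∫ φ dvolume > 0
  have hpos : 0 < ∫ x, φ x ∂(volume : Measure ℝ) := by
    refine (integral_pos_iff_support_of_nonneg (fun t => le_max_left _ _)
      (hφcont.integrable_of_hasCompactSupport hφcs)).mpr ?_
    have hopen : IsOpen {t | 0 < φ t} := isOpen_lt continuous_const hφcont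
    have hmem : -(2*s) ∈ {t | 0 < φ t} := by
      simp only [mem_setOf_eq, hφdef]
      have : (-(2*s) + 2*s) = 0 := by ring
      rw [this]
      simp
    have hsub : {t | 0 < φ t} ⊆ Function.support φ := fun t ht => ne_of_gt ht
    exact lt_of_lt_of_le (hopen.measure_pos volume ⟨_, hmem⟩) (measure_mono hsub)
  linarith

/-- if `μ` is a Radon measure on ℝ whose support is a non-empty proper
subset of ℝ, then there exists `x ∈ spt μ` with `L ∉ Tan(μ,x)`. -/
theorem stmt_11 (μ : Measure ℝ) (hRadon : IsLocallyFiniteMeasure μ)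
    (hne : (sptR μ).Nonempty) (hproper : sptR μ ≠ univ) :
    ∃ x ∈ sptR μ, ¬ IsTangentMeasureR μ x volume := by
  obtain ⟨x, hx⟩ := hne
  obtain ⟨y, hy⟩ : ∃ y, y ∉ sptR μ := by
    by_contra h
    push_neg at h
    exact hproper (eq_univ_of_forall h)
  rcases lt_trichotomy y x with hlt | heq | hgt
  · -- y < x : take b = inf of support to the right of y
    set S : Set ℝ := sptR μ ∩ Ici y with hS
    have hScl : IsClosed S := (sptR_closed μ).inter isClosed_Ici
    have hSne : S.Nonempty := ⟨x, hx, le_of_lt hlt⟩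
    have hSbdd : BddBelow S := ⟨y, fun z hz => hz.2⟩
    set b := sInf S with hb
    have hbS : b ∈ S := hScl.csInf_mem hSne hSbdd
    have hby : y < b := lt_of_le_of_ne hbS.2 (fun h => hy (h ▸ hbS.1))
    refine ⟨b, hbS.1, key_side μ b (b - y) 1 (by linarith) (Or.inl rfl) ?_⟩
    apply null_of_disjoint_sptR
    rw [disjoint_left]
    rintro z hz hzspt
    simp only [mem_setOf_eq, one_mul, mem_Ioo] at hz
    have : b ≤ z := csInf_le hSbdd ⟨hzspt, by simp only [mem_Ici]; linarith [hz.1, hz.2]⟩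
    linarith [hz.2]
  · exact absurd (heq ▸ hx) hy
  · -- x < y : take b = sup of support to the left of y
    set S : Set ℝ := sptR μ ∩ Iic y with hS
    have hScl : IsClosed S := (sptR_closed μ).inter isClosed_Iic
    have hSne : S.Nonempty := ⟨x, hx, le_of_lt hgt⟩
    have hSbdd : BddAbove S := ⟨y, fun z hz => hz.2⟩
    set b := sSup S with hb
    have hbS : b ∈ S := hScl.csSup_mem hSne hSbdd
    have hby : b < y := lt_of_le_of_ne hbS.2 (fun h => hy (h ▸ hbS.1))
    refine ⟨b, hbS.1, key_side μ b (y - b) (-1) (by linarith) (Or.inr rfl) ?_⟩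
    apply null_of_disjoint_sptR
    rw [disjoint_left]
    rintro z hz hzspt
    simp only [mem_setOf_eq, neg_one_mul, mem_Ioo] at hz
    have : z ≤ b := le_csSup hSbdd ⟨hzspt, by simp only [mem_Iic]; linarith [hz.1, hz.2]⟩
    linarith [hz.2]

end
end
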